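/- arXiv:1305.4825 — 4 statements merged into one kernel-verified Lean document; each statement's English description precedes it below -/
import Mathlib

section
/- (Lemma 4.3, Gaussian shift comparison.) Let N ≥ 1, σ > 0, u, v ∈ ℝ^N, and let ν_u and ν_v be the Gaussian measures N(u, σ²I_N) and N(v, σ²I_N) on ℝ^N. Let Φ denote the cumulative distribution function of a standard real Gaussian. Then for every Borel set A ⊂ ℝ^N, ν_v(A) ≥ 1 − Φ( Φ^{-1}(1 − ν_u(A)) + ‖u − v‖₂/σ ). -/
/-!
Neyman–Pearson argument. The likelihood ratio `dν_v/dν_u (x) = exp ((⟪v - u, x⟫ - κ) / σ²)` is an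
increasing function of the linear statistic `⟪v - u, x⟫`, so among all sets of a given
`ν_u`-measure the half-spaces `{⟪v - u, x⟫ ≥ c}` have the largest `ν_v`-measure. After
normalisation this statistic is `N(a, 1)` under `ν_u` and `N(a + ‖u - v‖ / σ, 1)` under `ν_v`, so a
half-space of `ν_u`-measure `Φ(t)` has `ν_v`-measure `Φ(t + ‖u - v‖ / σ)`. Apply this to `Aᶜ`.
-/

open MeasureTheory ProbabilityTheory Real Set
open scoped ENNReal

noncomputable section

/-- The standard gaussian cumulative distribution function `Φ`. -/
def Phi (t : ℝ) : ℝ := ((gaussianReal 0 1) (Set.Iic t)).toReal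

/-- `Φ` extended to the extended reals (with `Φ(−∞) = 0` and `Φ(+∞) = 1`). -/
def PhiE : EReal → ℝ := fun t => if t = ⊥ then 0 else if t = ⊤ then 1 else Phi t.toReal

/-- The (generalized) inverse of the standard gaussian cdf. -/
def PhiInv (p : ℝ) : EReal := sInf {t : EReal | p ≤ PhiE t}

/-- The gaussian measure `N(u, σ²I_N)` on `ℝ^N`. -/
def gaussVec {N : ℕ} (u : Fin N → ℝ) (σ : ℝ) : Measure (Fin N → ℝ) :=
  Measure.pi fun i => gaussianReal (u i) (Real.toNNReal (σ ^ 2))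

open scoped NNReal Topology
open Filter

namespace ProbabilityTheory

lemma continuous_cdf (μ : Measure ℝ) [IsProbabilityMeasure μ] [NullSingletonClass μ] :
    Continuous (cdf μ) := by
  refine continuous_iff_continuousAt.2 fun x => ?_
  have hmono : Monotone (cdf μ) := monotone_cdf μ
  have hjump : (cdf μ).measure {x} = 0 := by rw [measure_cdf]; exact measure_singleton x
  rw [StieltjesFunction.measure_singleton, ENNReal.ofReal_eq_zero, sub_nonpos] at hjump
  rw [hmono.continuousAt_iff_leftLim_eq_rightLim, ((cdf μ).right_continuous x).rightLim_eq]
  exact le_antisymm (hmono.leftLim_le le_rfl) hjump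

end ProbabilityTheory

instance nullSingletonClass_gaussianReal (m : ℝ) {v : ℝ≥0} [NeZero v] :
    NullSingletonClass (gaussianReal m v) := by
  rw [gaussianReal_of_var_ne_zero m (NeZero.ne v)]; infer_instance

lemma Phi_eq_cdf : Phi = cdf (gaussianReal 0 1) := by
  ext t; rw [cdf_eq_real, measureReal_def, Phi]

lemma continuous_Phi : Continuous Phi := Phi_eq_cdf ▸ continuous_cdf _

lemma strictMono_Phi : StrictMono Phi := by
  intro s t hst
  have hIoc : gaussianReal 0 1 (Ioc s t) = ENNReal.ofReal (Phi t - Phi s) := by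
    rw [Phi_eq_cdf, ← StieltjesFunction.measure_Ioc, measure_cdf]
  have hpos : gaussianReal 0 1 (Ioc s t) ≠ 0 := fun h =>
    hst.not_ge (by simpa using gaussianReal_absolutelyContinuous' 0 one_ne_zero h)
  rwa [hIoc, ne_eq, ENNReal.ofReal_eq_zero, not_le, sub_pos] at hpos

lemma tendsto_Phi_atBot : Tendsto Phi atBot (𝓝 0) := Phi_eq_cdf ▸ tendsto_cdf_atBot _

lemma tendsto_Phi_atTop : Tendsto Phi atTop (𝓝 1) := Phi_eq_cdf ▸ tendsto_cdf_atTop _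

lemma Phi_pos (t : ℝ) : 0 < Phi t :=
  (Phi_eq_cdf ▸ cdf_nonneg _ (t - 1)).trans_lt (strictMono_Phi (sub_one_lt t))

lemma Phi_lt_one (t : ℝ) : Phi t < 1 :=
  (strictMono_Phi (lt_add_one t)).trans_le (Phi_eq_cdf ▸ cdf_le_one _ (t + 1))

lemma exists_Phi_eq {q : ℝ} (h0 : 0 < q) (h1 : q < 1) : ∃ t, Phi t = q :=
  mem_range_of_exists_le_of_exists_ge continuous_Phi
    (tendsto_Phi_atBot.eventually_le_const h0).exists
    (tendsto_Phi_atTop.eventually_const_le h1).exists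

lemma gaussianReal_one_Ici (m c : ℝ) :
    gaussianReal m 1 (Ici c) = ENNReal.ofReal (Phi (m - c)) := by
  have hpre : (m - ·) ⁻¹' Iic (m - c) = Ici c := by ext x; simp
  rw [Phi_eq_cdf, ofReal_cdf, ← sub_self m, ← gaussianReal_map_const_sub m,
    Measure.map_apply (by fun_prop) measurableSet_Iic, hpre]

@[simp] lemma PhiE_bot : PhiE ⊥ = 0 := if_pos rfl

@[simp] lemma PhiE_top : PhiE ⊤ = 1 := by simp [PhiE]

@[simp] lemma PhiE_coe (t : ℝ) : PhiE t = Phi t := by simp [PhiE]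

lemma PhiE_nonneg (x : EReal) : 0 ≤ PhiE x := by
  induction x using EReal.rec <;> simp [(Phi_pos _).le]

lemma PhiInv_zero : PhiInv 0 = ⊥ := by
  simp [PhiInv, PhiE_nonneg]

lemma PhiInv_one : PhiInv 1 = ⊤ := by
  refine sInf_eq_top.2 fun x hx => ?_
  induction x using EReal.rec with
  | bot => norm_num at hx
  | coe t => exact absurd (Phi_lt_one t) (by simpa using hx)
  | top => rfl

lemma PhiInv_Phi (t : ℝ) : PhiInv (Phi t) = t := by
  refine le_antisymm (sInf_le (by simp)) (le_sInf fun x hx => ?_)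
  induction x using EReal.rec with
  | bot => exact absurd (Phi_pos t) (by simpa using hx)
  | coe s => exact EReal.coe_le_coe_iff.2 (strictMono_Phi.le_iff_le.1 (by simpa using hx))
  | top => exact le_top

lemma gaussianReal_pi_map_sum_mul {ι : Type*} [Fintype ι] (m c : ι → ℝ) (v : ι → ℝ≥0) :
    (Measure.pi fun i => gaussianReal (m i) (v i)).map (fun x => ∑ i, c i * x i) =
      gaussianReal (∑ i, c i * m i) (∑ i, (c i ^ 2).toNNReal * v i) := by
  have hcomp : (fun x : ι → ℝ => ∑ i, c i * x i) = (fun y => ∑ i, y i) ∘ fun x i => c i * x i :=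
    rfl
  rw [hcomp, ← Measure.map_map (by fun_prop) (by fun_prop),
    Measure.pi_map_pi fun i => by fun_prop]
  simp_rw [gaussianReal_map_const_mul]
  refine Measure.ext_of_charFun (funext fun t => ?_)
  rw [charFun_map_sum_pi_eq_prod, Finset.prod_apply]
  simp_rw [charFun_gaussianReal, ← Complex.exp_sum]
  congr 1
  push_cast
  simp only [Real.coe_toNNReal _ (sq_nonneg _), Complex.ofReal_pow, Finset.mul_sum, Finset.sum_mul,
    Finset.sum_div, ← Finset.sum_sub_distrib]

section PiWithDensity

variable {ι : Type*} [Fintype ι] {Ω : ι → Type*} [∀ i, MeasurableSpace (Ω i)]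
  {μ : ∀ i, Measure (Ω i)} [∀ i, IsProbabilityMeasure (μ i)]

lemma lintegral_fintype_prod_eq_prod {f : ∀ i, Ω i → ℝ≥0∞} (hf : ∀ i, Measurable (f i)) :
    ∫⁻ x, ∏ i, f i (x i) ∂Measure.pi μ = ∏ i, ∫⁻ y, f i y ∂μ i := by
  rw [lintegral_prod_eq_prod_lintegral_of_indepFun _ _ (iIndepFun_pi fun i => (hf i).aemeasurable)
    fun i => (hf i).comp (measurable_pi_apply i)]
  exact Finset.prod_congr rfl fun i _ => (measurePreserving_eval μ i).lintegral_comp (hf i)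

lemma MeasureTheory.Measure.pi_withDensity {f : ∀ i, Ω i → ℝ≥0∞} (hf : ∀ i, Measurable (f i))
    [∀ i, SigmaFinite ((μ i).withDensity (f i))] :
    Measure.pi (fun i => (μ i).withDensity (f i)) =
      (Measure.pi μ).withDensity fun x => ∏ i, f i (x i) := by
  refine Measure.pi_eq fun s hs => ?_
  have hbox : (univ.pi s).indicator (fun x => ∏ i, f i (x i)) =
      fun x => ∏ i, (s i).indicator (f i) (x i) := by
    ext x
    by_cases hx : x ∈ univ.pi s
    · simp_all [Set.indicator_of_mem]
    · obtain ⟨i, hi⟩ : ∃ i, x i ∉ s i := by simpa using hx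
      rw [Set.indicator_of_notMem hx, Finset.prod_eq_zero (Finset.mem_univ i)
        (Set.indicator_of_notMem hi _)]
  rw [withDensity_apply _ (.univ_pi hs), ← lintegral_indicator (.univ_pi hs), hbox,
    lintegral_fintype_prod_eq_prod fun i => (hf i).indicator (hs i)]
  simp_rw [withDensity_apply _ (hs _), lintegral_indicator (hs _)]

end PiWithDensity

lemma gaussianReal_eq_withDensity_gaussianReal (a b : ℝ) {v : ℝ≥0} (hv : v ≠ 0) :
    gaussianReal b v = (gaussianReal a v).withDensity
      fun x => ENNReal.ofReal (exp (((b - a) * x - (b ^ 2 - a ^ 2) / 2) / v)) := by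
  rw [gaussianReal_of_var_ne_zero b hv, gaussianReal_of_var_ne_zero a hv,
    ← withDensity_mul volume (measurable_gaussianPDF _ _) (by fun_prop)]
  congr 1
  ext x
  rw [Pi.mul_apply, gaussianPDF, gaussianPDF,
    ← ENNReal.ofReal_mul (gaussianPDFReal_nonneg _ _ _), gaussianPDFReal, gaussianPDFReal,
    mul_assoc _ (exp _), ← exp_add]
  congr 3
  field_simp
  ring

instance (N : ℕ) (u : Fin N → ℝ) (σ : ℝ) : IsProbabilityMeasure (gaussVec u σ) := by
  unfold gaussVec; infer_instance

lemma gaussVec_eq_withDensity {N : ℕ} (u v : Fin N → ℝ) {σ : ℝ} (hσ : σ ≠ 0) :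
    gaussVec v σ = (gaussVec u σ).withDensity fun x => ENNReal.ofReal
      (exp ((∑ i, (v i - u i) * x i - ∑ i, (v i ^ 2 - u i ^ 2) / 2) / σ ^ 2)) := by
  have hvar : (σ ^ 2).toNNReal ≠ 0 := by simpa using hσ
  have hdens (i : Fin N) := gaussianReal_eq_withDensity_gaussianReal (u i) (v i) hvar
  rw [gaussVec, gaussVec, funext hdens, Measure.pi_withDensity fun i => by fun_prop]
  congr 1
  ext x
  rw [← ENNReal.ofReal_prod_of_nonneg fun i _ => (exp_pos _).le, ← exp_sum,
    Real.coe_toNNReal _ (sq_nonneg σ), ← Finset.sum_div, ← Finset.sum_sub_distrib]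

lemma withDensity_apply_le_neymanPearson {α : Type*} [MeasurableSpace α] {μ : Measure α}
    [IsFiniteMeasure μ] {L : α → ℝ≥0∞} (hL : Measurable L) {T : α → ℝ} (hT : Measurable T)
    (hLT : ∀ x y, T x ≤ T y → L x ≤ L y) {B : Set α} (hB : MeasurableSet B) {c : ℝ}
    (hBc : μ B ≤ μ {x | c ≤ T x}) :
    μ.withDensity L B ≤ μ.withDensity L {x | c ≤ T x} := by
  set H := {x | c ≤ T x}
  have hH : MeasurableSet H := measurableSet_le measurable_const hT
  -- a threshold with `L ≤ k` on `B \ H` and `k ≤ L` on `H \ B`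
  set k := ⨆ x ∈ B \ H, L x
  have hB_diff : μ (B \ H) ≤ μ (H \ B) := by
    rw [← ENNReal.add_le_add_iff_left (measure_ne_top μ (B ∩ H)), measure_inter_add_sdiff B hH,
      inter_comm, measure_inter_add_sdiff H hB]
    exact hBc
  have hupper : μ.withDensity L (B \ H) ≤ k * μ (B \ H) := by
    rw [withDensity_apply _ (hB.diff hH), ← setLIntegral_const]
    exact setLIntegral_mono measurable_const fun x hx => le_iSup₂ (f := fun x _ => L x) x hx
  have hlower : k * μ (H \ B) ≤ μ.withDensity L (H \ B) := by
    rw [withDensity_apply _ (hH.diff hB), ← setLIntegral_const]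
    refine setLIntegral_mono hL fun y hy => iSup₂_le fun x hx => hLT x y ?_
    exact (not_le.1 hx.2).le.trans hy.1
  calc μ.withDensity L B = μ.withDensity L (B ∩ H) + μ.withDensity L (B \ H) :=
        (measure_inter_add_sdiff B hH).symm
    _ ≤ μ.withDensity L (H ∩ B) + μ.withDensity L (H \ B) := by
        rw [inter_comm]
        have hmid : k * μ (B \ H) ≤ k * μ (H \ B) := by gcongr
        exact add_le_add le_rfl (hupper.trans (hmid.trans hlower))
    _ = μ.withDensity L H := measure_inter_add_sdiff H hB

lemma gaussVec_halfSpace {N : ℕ} (u c : Fin N → ℝ) {σ : ℝ} (hc : ∑ i, c i ^ 2 * σ ^ 2 = 1)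
    (s : ℝ) : gaussVec u σ {x | ∑ i, c i * u i - s ≤ ∑ i, c i * x i} = ENNReal.ofReal (Phi s) := by
  have hvar : ∑ i, (c i ^ 2).toNNReal * (σ ^ 2).toNNReal = 1 := by
    ext; push_cast [Real.coe_toNNReal _ (sq_nonneg _)]; exact hc
  have hlaw := gaussianReal_pi_map_sum_mul u c fun _ => (σ ^ 2).toNNReal
  rw [hvar] at hlaw
  change gaussVec u σ ((fun x => ∑ i, c i * x i) ⁻¹' Ici (∑ i, c i * u i - s)) = _
  rw [gaussVec, ← Measure.map_apply (by fun_prop) measurableSet_Ici, hlaw, gaussianReal_one_Ici,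
    sub_sub_cancel]

lemma gaussVec_real_le_Phi_add {N : ℕ} {σ : ℝ} (hσ : 0 < σ) (u v : Fin N → ℝ)
    {B : Set (Fin N → ℝ)} (hB : MeasurableSet B) {t : ℝ} (ht : (gaussVec u σ B).toReal ≤ Phi t) :
    (gaussVec v σ B).toReal ≤ Phi (t + √(∑ i, (u i - v i) ^ 2) / σ) := by
  set W := √(∑ i, (u i - v i) ^ 2)
  have hW2 : W ^ 2 = ∑ i, (u i - v i) ^ 2 := sq_sqrt (by positivity)
  rcases (sqrt_nonneg _ : 0 ≤ W).eq_or_lt with hW0 | hWpos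
  · have hsum : ∑ i, (u i - v i) ^ 2 = 0 := by rw [← hW2, show W = 0 from hW0.symm]; ring
    have huv : u = v := funext fun i => sub_eq_zero.1 <| pow_eq_zero_iff two_ne_zero |>.1 <|
      (Finset.sum_eq_zero_iff_of_nonneg fun j _ => sq_nonneg (u j - v j)).1 hsum i
        (Finset.mem_univ i)
    subst huv
    simpa [W] using ht
  -- `c` is `v - u` scaled so that `⟪c, x⟫` has variance `1` under `gaussVec u σ`
  set c : Fin N → ℝ := fun i => (v i - u i) / (W * σ)
  have hW : W ≠ 0 := hWpos.ne'
  have hc : ∑ i, c i ^ 2 * σ ^ 2 = 1 := by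
    have hterm (i : Fin N) : c i ^ 2 * σ ^ 2 = (u i - v i) ^ 2 / W ^ 2 := by
      simp only [c]; field_simp; ring
    rw [Finset.sum_congr rfl fun i _ => hterm i, ← Finset.sum_div, ← hW2,
      div_self (pow_ne_zero _ hW)]
  have hcv : ∑ i, c i * v i - (t + W / σ) = ∑ i, c i * u i - t := by
    have hshift : ∑ i, c i * (v i - u i) = W / σ := by
      rw [show ∑ i, c i * (v i - u i) = (∑ i, (u i - v i) ^ 2) / (W * σ) by
        rw [Finset.sum_div]; exact Finset.sum_congr rfl fun i _ => by simp only [c]; ring, ← hW2]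
      field_simp
    simp only [mul_sub, Finset.sum_sub_distrib] at hshift
    linarith
  have hstat (x : Fin N → ℝ) : ∑ i, (v i - u i) * x i = W * σ * ∑ i, c i * x i := by
    rw [Finset.mul_sum]
    exact Finset.sum_congr rfl fun i _ => by simp only [c]; field_simp
  have hNP : gaussVec v σ B ≤ gaussVec v σ {x | ∑ i, c i * u i - t ≤ ∑ i, c i * x i} := by
    rw [gaussVec_eq_withDensity u v hσ.ne']
    refine withDensity_apply_le_neymanPearson (by fun_prop) (by fun_prop) (fun x y hxy => ?_) hB ?_
    · simp only [hstat]
      gcongr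
    · rwa [gaussVec_halfSpace u c hc, ENNReal.le_ofReal_iff_toReal_le (measure_ne_top _ _)
        (Phi_pos t).le]
  rw [← hcv, gaussVec_halfSpace v c hc] at hNP
  exact ENNReal.toReal_le_of_le_ofReal (Phi_pos _).le hNP

/-- **Lemma 4.3** (gaussian shift comparison). -/
theorem lemma_4_3 (N : ℕ) (σ : ℝ) (hσ : 0 < σ) (u v : Fin N → ℝ)
    (A : Set (Fin N → ℝ)) (hA : MeasurableSet A) :
    1 - PhiE (PhiInv (1 - (gaussVec u σ A).toReal) +
        ((Real.sqrt (∑ i, (u i - v i) ^ 2) / σ : ℝ) : EReal)) ≤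
      (gaussVec v σ A).toReal := by
  have hcompl (w : Fin N → ℝ) : 1 - (gaussVec w σ A).toReal = (gaussVec w σ Aᶜ).toReal :=
    (probReal_compl_eq_one_sub hA).symm
  rw [hcompl, sub_le_comm, hcompl]
  rcases (ENNReal.toReal_nonneg : 0 ≤ (gaussVec u σ Aᶜ).toReal).eq_or_lt with hq0 | hq0
  · rw [← hq0, PhiInv_zero, EReal.bot_add, PhiE_bot]
    refine ge_of_tendsto' (tendsto_Phi_atBot.comp (tendsto_atBot_add_const_right _ _ tendsto_id))
      fun t => gaussVec_real_le_Phi_add hσ u v hA.compl (hq0 ▸ (Phi_pos t).le)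
  rcases (show (gaussVec u σ Aᶜ).toReal ≤ 1 from measureReal_le_one).eq_or_lt with hq1 | hq1
  · rw [hq1, PhiInv_one, EReal.top_add_coe, PhiE_top]
    exact measureReal_le_one
  obtain ⟨t, ht⟩ := exists_Phi_eq hq0 hq1
  rw [← ht, PhiInv_Phi, ← EReal.coe_add, PhiE_coe]
  exact gaussVec_real_le_Phi_add hσ u v hA.compl ht.ge
end
end

section
/- (Theorem 4.4, Gaussian shift theorem of Kuelbs–Li.) Let ν be the standard Gaussian measure on ℝ^N, let B ⊂ ℝ^N be a Borel set, let w ∈ ℝ^N, and let H₊ = {x ∈ ℝ^N : ⟨x, w⟩ ≥ b} be a halfspace (for some b ∈ ℝ) satisfying ν(H₊) = ν(B). Then ν(w + B) ≥ ν(w + H₊). -/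
/-!
Translating by `w` multiplies the standard gaussian density by
`x ↦ exp (-⟪x, w⟫ - ‖w‖² / 2)`, a decreasing function of `⟪x, w⟫`. The halfspace `H₊` consists
of the points where this factor is smallest, so exchanging the parts `H₊ \ B` and `B \ H₊`,
which have equal gaussian measure, can only increase the shifted measure (bathtub principle).
-/

open MeasureTheory ProbabilityTheory Real Set
open scoped ENNReal

noncomputable section

/-- The standard gaussian measure on `ℝ^N`. -/
def stdGaussVec (N : ℕ) : Measure (Fin N → ℝ) :=
  Measure.pi fun _ : Fin N => gaussianReal 0 1

theorem Set.indicator_univ_pi_prod_apply {ι : Type*} [Fintype ι] {α : ι → Type*} {M : Type*}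
    [CommMonoidWithZero M] (s : ∀ i, Set (α i)) (f : ∀ i, α i → M) (x : ∀ i, α i) :
    (univ.pi s).indicator (fun x => ∏ i, f i (x i)) x = ∏ i, (s i).indicator (f i) (x i) := by
  by_cases hx : x ∈ univ.pi s
  · rw [indicator_of_mem hx]
    exact Finset.prod_congr rfl fun i _ => (indicator_of_mem (hx i trivial) _).symm
  · obtain ⟨i, -, hi⟩ := not_forall₂.1 hx
    rw [indicator_of_notMem hx, Finset.prod_eq_zero (Finset.mem_univ i) (indicator_of_notMem hi _)]

namespace MeasureTheory

/-- Proved through the independence of the coordinates under `Measure.pi μ`, hence the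
assumption that the `μ i` are probability measures. -/
theorem Measure.pi_withDensity_s11 {ι : Type*} [Fintype ι] {α : ι → Type*}
    [∀ i, MeasurableSpace (α i)] (μ : ∀ i, Measure (α i)) [∀ i, IsProbabilityMeasure (μ i)]
    {f : ∀ i, α i → ℝ≥0∞} (hf : ∀ i, Measurable (f i))
    [∀ i, SigmaFinite ((μ i).withDensity (f i))] :
    Measure.pi (fun i => (μ i).withDensity (f i))
      = (Measure.pi μ).withDensity (fun x => ∏ i, f i (x i)) := by
  refine Measure.pi_eq fun s hs => ?_
  rw [withDensity_apply _ (.univ_pi hs), ← lintegral_indicator (.univ_pi hs)]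
  simp_rw [Set.indicator_univ_pi_prod_apply]
  rw [lintegral_prod_eq_prod_lintegral_of_indepFun _ _
    (iIndepFun_pi fun i => ((hf i).indicator (hs i)).aemeasurable)
    fun i => ((hf i).indicator (hs i)).comp (measurable_pi_apply i)]
  refine Finset.prod_congr rfl fun i _ => ?_
  rw [(measurePreserving_eval μ i).lintegral_comp ((hf i).indicator (hs i)),
    lintegral_indicator (hs i), withDensity_apply _ (hs i)]

theorem setLIntegral_le_setLIntegral_of_measure_sdiff_eq {α : Type*} [MeasurableSpace α]
    {μ : Measure α} {s t : Set α} (hs : MeasurableSet s) (ht : MeasurableSet t)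
    (hst : μ (s \ t) = μ (t \ s)) {f : α → ℝ≥0∞} {c : ℝ≥0∞}
    (hf_le : ∀ x ∈ s \ t, f x ≤ c) (hf_ge : ∀ x ∈ t \ s, c ≤ f x) :
    ∫⁻ x in s, f x ∂μ ≤ ∫⁻ x in t, f x ∂μ :=
  calc ∫⁻ x in s, f x ∂μ
      = ∫⁻ x in s ∩ t, f x ∂μ + ∫⁻ x in s \ t, f x ∂μ := (lintegral_inter_add_sdiff f s ht).symm
    _ ≤ ∫⁻ x in t ∩ s, f x ∂μ + ∫⁻ _ in s \ t, c ∂μ := by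
        rw [inter_comm]
        exact add_le_add le_rfl (setLIntegral_mono' (hs.diff ht) hf_le)
    _ = ∫⁻ x in t ∩ s, f x ∂μ + ∫⁻ _ in t \ s, c ∂μ := by simp only [setLIntegral_const, hst]
    _ ≤ ∫⁻ x in t ∩ s, f x ∂μ + ∫⁻ x in t \ s, f x ∂μ :=
        add_le_add le_rfl (setLIntegral_mono' (ht.diff hs) hf_ge)
    _ = ∫⁻ x in t, f x ∂μ := lintegral_inter_add_sdiff f t hs

end MeasureTheory

namespace ProbabilityTheory

theorem gaussianReal_add_eq_withDensity (m c : ℝ) {v : NNReal} (hv : v ≠ 0) :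
    gaussianReal (m + c) v
      = (gaussianReal m v).withDensity
          fun x => ENNReal.ofReal (exp ((c * (x - m) - c ^ 2 / 2) / v)) := by
  rw [gaussianReal_of_var_ne_zero _ hv, gaussianReal_of_var_ne_zero _ hv,
    ← withDensity_mul _ (measurable_gaussianPDF _ _) (by fun_prop)]
  congr with x
  rw [Pi.mul_apply, gaussianPDF, gaussianPDF, ← ENNReal.ofReal_mul (gaussianPDFReal_nonneg m v x)]
  simp only [gaussianPDFReal, mul_assoc, ← exp_add]
  congr 3
  have : (v : ℝ) ≠ 0 := by exact_mod_cast hv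
  field_simp
  ring

end ProbabilityTheory

instance isProbabilityMeasure_stdGaussVec (N : ℕ) : IsProbabilityMeasure (stdGaussVec N) := by
  unfold stdGaussVec; infer_instance

theorem stdGaussVec_map_const_add (N : ℕ) (w : Fin N → ℝ) :
    (stdGaussVec N).map (w + ·) = (stdGaussVec N).withDensity
      fun x => ENNReal.ofReal (exp (∑ i, x i * w i - ∑ i, w i ^ 2 / 2)) := by
  have hw : ∀ i, gaussianReal (w i) 1 = (gaussianReal 0 1).withDensity
      fun t => ENNReal.ofReal (exp (t * w i - w i ^ 2 / 2)) := fun i => by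
    simpa [mul_comm] using gaussianReal_add_eq_withDensity 0 (w i) one_ne_zero
  rw [stdGaussVec, show (w + ·) = fun (x : Fin N → ℝ) i => w i + x i from rfl,
    Measure.pi_map_pi fun _ => by fun_prop]
  simp_rw [gaussianReal_map_const_add, zero_add, hw]
  rw [Measure.pi_withDensity_s11 _ fun _ => by fun_prop]
  congr with x
  rw [← ENNReal.ofReal_prod_of_nonneg fun _ _ => (exp_pos _).le, ← exp_sum,
    Finset.sum_sub_distrib]

theorem stdGaussVec_image_const_add (N : ℕ) (w : Fin N → ℝ) {A : Set (Fin N → ℝ)}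
    (hA : MeasurableSet A) :
    stdGaussVec N ((w + ·) '' A) = ∫⁻ x in A,
      ENNReal.ofReal (exp (-(∑ i, x i * w i) - ∑ i, w i ^ 2 / 2)) ∂stdGaussVec N := by
  rw [image_add_left, ← Measure.map_apply (by fun_prop) hA, stdGaussVec_map_const_add,
    withDensity_apply _ hA]
  simp [Finset.sum_neg_distrib]

/-- **Theorem 4.4** (gaussian shift theorem of Kuelbs–Li): among all sets of a given
standard gaussian measure, shifted halfspaces orthogonal to the shift have minimal
shifted measure. -/
theorem gaussian_shift_kuelbs_li (N : ℕ) (B : Set (Fin N → ℝ)) (hB : MeasurableSet B)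
    (w : Fin N → ℝ) (b : ℝ)
    (hH : stdGaussVec N {x : Fin N → ℝ | b ≤ ∑ i, x i * w i} = stdGaussVec N B) :
    stdGaussVec N ((fun x => w + x) '' {x : Fin N → ℝ | b ≤ ∑ i, x i * w i}) ≤
      stdGaussVec N ((fun x => w + x) '' B) := by
  set H := {x : Fin N → ℝ | b ≤ ∑ i, x i * w i}
  have hHm : MeasurableSet H := measurableSet_le measurable_const (by fun_prop)
  rw [stdGaussVec_image_const_add N w hHm, stdGaussVec_image_const_add N w hB]
  refine setLIntegral_le_setLIntegral_of_measure_sdiff_eq hHm hB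
    (measure_sdiff_symm hHm.nullMeasurableSet hB.nullMeasurableSet hH (measure_ne_top _ _))
    (c := ENNReal.ofReal (exp (-b - ∑ i, w i ^ 2 / 2))) ?_ ?_
  · rintro x ⟨hxH, -⟩
    gcongr
    exact hxH
  · rintro x ⟨-, hxH⟩
    gcongr
    exact (not_le.1 hxH).le
end
end

section
/- (Lemma 3.4, comparison of fixed points.) Let T ⊂ ℝ^d be convex and symmetric, let N ≥ 1, Q > 0 and c₀ > 0. Define r_k(Q) := inf{r > 0 : ℓ*(2T ∩ rB₂^d) ≤ Q r √k} for integers k, let k* be the smallest integer exceeding (ℓ*(T)/(Q·diam(T)))², let A := {k ≥ k* : r_k(Q) ≤ c₀ Q √(k/N)} and, assuming A is nonempty, set k₁ := min A. Define s_N*(η) := inf{s > 0 : ℓ*(2T ∩ sB₂^d) ≤ η s² √N}. Then: (a) if η ≤ 2/c₀, then r_{k₁}(Q)/2 ≤ s_N*(η); and (b) if η ≥ 1/c₀ and k₁ > k*, then r_{k₁−1}(Q) ≥ s_N*(η). -/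
open MeasureTheory ProbabilityTheory Real Set
open scoped RealInnerProductSpace ENNReal NNReal Pointwise

noncomputable section
/-- The standard gaussian measure on `ℝ^d`. -/
def stdGaussian (d : ℕ) : Measure (EuclideanSpace ℝ (Fin d)) :=
  (Measure.pi fun _ : Fin d => gaussianReal 0 1).map
    (MeasurableEquiv.toLp 2 (Fin d → ℝ))

/-- The gaussian mean width `ℓ*(T) = E sup_{t ∈ T} ⟨g,t⟩` of `T ⊆ ℝ^d`. -/
def gaussWidth {d : ℕ} (T : Set (EuclideanSpace ℝ (Fin d))) : ℝ :=
  ∫ g, (⨆ t : T, (inner ℝ g t.1 : ℝ)) ∂(stdGaussian d)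

/-- The fixed point `r_k(Q) = inf{r > 0 : ℓ*(2T ∩ rB₂) ≤ Q r √k}`. -/
def rK {d : ℕ} (T : Set (EuclideanSpace ℝ (Fin d))) (Q : ℝ) (k : ℕ) : ℝ :=
  sInf {r : ℝ | 0 < r ∧
    gaussWidth (((2 : ℝ) • T) ∩ Metric.closedBall 0 r) ≤ Q * r * Real.sqrt (k : ℝ)}

/-- `k*`, the smallest integer exceeding `(ℓ*(T)/(Q diam T))²`. -/
def kStar {d : ℕ} (T : Set (EuclideanSpace ℝ (Fin d))) (Q : ℝ) : ℕ :=
  Nat.floor ((gaussWidth T / (Q * Metric.diam T)) ^ 2) + 1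

/-- The fixed point `s_N*(η) = inf{s > 0 : ℓ*(2T ∩ sB₂) ≤ η s² √N}`. -/
def sStar {d : ℕ} (T : Set (EuclideanSpace ℝ (Fin d))) (N : ℕ) (η : ℝ) : ℝ :=
  sInf {s : ℝ | 0 < s ∧
    gaussWidth (((2 : ℝ) • T) ∩ Metric.closedBall 0 s) ≤ η * s ^ 2 * Real.sqrt (N : ℝ)}

/-!
Write `w r = ℓ*(2T ∩ r B₂)`. As `T` is convex and symmetric, `2T` is star-shaped about `0`, and
shrinking `2T ∩ b B₂` by `a / b` lands in `2T ∩ a B₂`; hence `r ↦ w r / r` is nonincreasing on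
`(0, ∞)`. The fixed point `r_k` compares `w` with the line `Q √k r`, and `s_N*` compares it with
the parabola `η √N s²`.

(a) If `s` satisfies `w s ≤ η √N s²` but `2s < r_{k₁} ≤ c₀ Q √(k₁/N)`, then `ηc₀ ≤ 2` gives
`η √N s ≤ Q √k₁`, so `w (2s) ≤ 2 w s ≤ Q √k₁ · 2s`: `2s` is in the set whose infimum is `r_{k₁}`.

(b) By minimality of `k₁`, `r_{k₁-1} > c₀ Q √((k₁-1)/N)`; with `ηc₀ ≥ 1` every `r` in the set
defining `r_{k₁-1}`, being at least `r_{k₁-1}`, satisfies `Q √(k₁-1) r ≤ η √N r²`.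
-/

section SupportFunction

variable {E : Type*} [NormedAddCommGroup E] [InnerProductSpace ℝ E]

def supportFun (K : Set E) (g : E) : ℝ :=
  ⨆ t : K, ⟪g, (t : E)⟫

variable {K S : Set E} {r : ℝ}

@[simp]
lemma supportFun_empty (g : E) : supportFun ∅ g = 0 :=
  Real.iSup_of_isEmpty _

lemma abs_inner_le_of_subset_closedBall (hK : K ⊆ Metric.closedBall 0 r) (g : E) (t : K) :
    |⟪g, (t : E)⟫| ≤ r * ‖g‖ := by
  have ht : ‖(t : E)‖ ≤ r := mem_closedBall_zero_iff.1 (hK t.2)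
  calc |⟪g, (t : E)⟫| ≤ ‖g‖ * ‖(t : E)‖ := abs_real_inner_le_norm g t
    _ ≤ r * ‖g‖ := by rw [mul_comm]; gcongr

lemma bddAbove_range_inner (hK : K ⊆ Metric.closedBall 0 r) (g : E) :
    BddAbove (range fun t : K => ⟪g, (t : E)⟫) := by
  refine ⟨r * ‖g‖, ?_⟩
  rintro _ ⟨t, rfl⟩
  exact (abs_le.1 (abs_inner_le_of_subset_closedBall hK g t)).2

lemma abs_supportFun_le (hr : 0 ≤ r) (hK : K ⊆ Metric.closedBall 0 r) (g : E) :
    |supportFun K g| ≤ r * ‖g‖ := by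
  have hbound := abs_inner_le_of_subset_closedBall hK g
  rcases K.eq_empty_or_nonempty with rfl | ⟨t, ht⟩
  · rw [supportFun_empty, abs_zero]
    positivity
  refine abs_le.2 ⟨?_, Real.iSup_le (fun t => (abs_le.1 (hbound t)).2) (by positivity)⟩
  exact (abs_le.1 (hbound ⟨t, ht⟩)).1.trans (le_ciSup (bddAbove_range_inner hK g) ⟨t, ht⟩)

lemma supportFun_nonneg (hK : StarConvex ℝ 0 K) (g : E) : 0 ≤ supportFun K g := by
  rcases K.eq_empty_or_nonempty with rfl | hne
  · exact (supportFun_empty g).ge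
  exact Real.iSup_nonneg' ⟨⟨0, hK.mem hne⟩, by simp⟩

lemma measurable_supportFun [MeasurableSpace E] [OpensMeasurableSpace E]
    (hK : Bornology.IsBounded K) : Measurable (supportFun K) := by
  obtain ⟨r, hK⟩ := hK.subset_closedBall 0
  exact (lowerSemicontinuous_ciSup (bddAbove_range_inner hK)
    fun t => (continuous_id.inner continuous_const).lowerSemicontinuous).measurable

lemma supportFun_inter_closedBall_le (hS : StarConvex ℝ 0 S) {a b : ℝ} (ha : 0 < a)
    (hab : a ≤ b) (g : E) :
    supportFun (S ∩ Metric.closedBall 0 b) g ≤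
      b / a * supportFun (S ∩ Metric.closedBall 0 a) g := by
  have hb : 0 < b := ha.trans_le hab
  have hSa : StarConvex ℝ 0 (S ∩ Metric.closedBall 0 a) :=
    hS.inter ((convex_closedBall 0 a).starConvex (Metric.mem_closedBall_self ha.le))
  rcases (S ∩ Metric.closedBall (0 : E) b).eq_empty_or_nonempty with hempty | hne
  · rw [hempty, supportFun_empty]
    exact mul_nonneg (div_nonneg hb.le ha.le) (supportFun_nonneg hSa g)
  have := hne.to_subtype
  refine ciSup_le fun t => ?_
  have hc : 0 ≤ a / b := div_nonneg ha.le hb.le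
  have hmem : (a / b) • (t : E) ∈ S ∩ Metric.closedBall 0 a := by
    refine ⟨hS.smul_mem t.2.1 hc (div_le_one_of_le₀ hab hb.le), ?_⟩
    rw [mem_closedBall_zero_iff, norm_smul, Real.norm_of_nonneg hc]
    calc a / b * ‖(t : E)‖ ≤ a / b * b := by gcongr; exact mem_closedBall_zero_iff.1 t.2.2
      _ = a := div_mul_cancel₀ a hb.ne'
  calc ⟪g, (t : E)⟫ = b / a * ⟪g, (a / b) • (t : E)⟫ := by
        rw [real_inner_smul_right]; field_simp
    _ ≤ b / a * supportFun (S ∩ Metric.closedBall 0 a) g := by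
        gcongr
        exact le_ciSup (bddAbove_range_inner inter_subset_right g) ⟨_, hmem⟩

end SupportFunction

lemma Convex.starConvex_zero_of_neg_mem {E : Type*} [AddCommGroup E] [Module ℝ E] {T : Set E}
    (hT : Convex ℝ T) (hsym : ∀ t ∈ T, -t ∈ T) : StarConvex ℝ 0 T := by
  rcases T.eq_empty_or_nonempty with rfl | ⟨t, ht⟩
  · exact starConvex_empty 0
  refine hT.starConvex ?_
  simpa using hT ht (hsym t ht) (by norm_num : (0 : ℝ) ≤ 1 / 2) (by norm_num : (0 : ℝ) ≤ 1 / 2)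
    (by norm_num)

lemma integrable_supportFun {E : Type*} [NormedAddCommGroup E] [InnerProductSpace ℝ E]
    [CompleteSpace E] [SecondCountableTopology E] [MeasurableSpace E] [BorelSpace E]
    {μ : Measure E} [IsGaussian μ] {K : Set E} (hK : Bornology.IsBounded K) :
    Integrable (supportFun K) μ := by
  obtain ⟨r, hr, hKr⟩ := hK.subset_closedBall_lt 0 0
  exact (IsGaussian.integrable_id.norm.const_mul r).mono'
    (measurable_supportFun hK).aestronglyMeasurable
    (ae_of_all _ fun g => abs_supportFun_le hr.le hKr g)

section GaussianWidth

variable {d : ℕ}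

lemma stdGaussian_eq_stdGaussian_euclideanSpace :
    _root_.stdGaussian d = ProbabilityTheory.stdGaussian (EuclideanSpace ℝ (Fin d)) :=
  map_pi_eq_stdGaussian

lemma gaussWidth_eq_integral_supportFun (K : Set (EuclideanSpace ℝ (Fin d))) :
    gaussWidth K = ∫ g, supportFun K g ∂ProbabilityTheory.stdGaussian _ := by
  rw [gaussWidth, stdGaussian_eq_stdGaussian_euclideanSpace]
  rfl

lemma gaussWidth_inter_closedBall_le {S : Set (EuclideanSpace ℝ (Fin d))}
    (hS : StarConvex ℝ 0 S) {a b : ℝ} (ha : 0 < a) (hab : a ≤ b) :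
    gaussWidth (S ∩ Metric.closedBall 0 b) ≤ b / a * gaussWidth (S ∩ Metric.closedBall 0 a) := by
  have hSb : StarConvex ℝ 0 (S ∩ Metric.closedBall 0 b) :=
    hS.inter ((convex_closedBall 0 b).starConvex (Metric.mem_closedBall_self (ha.le.trans hab)))
  rw [gaussWidth_eq_integral_supportFun, gaussWidth_eq_integral_supportFun, ← integral_const_mul]
  exact integral_mono_of_nonneg (ae_of_all _ (supportFun_nonneg hSb))
    ((integrable_supportFun (Metric.isBounded_closedBall.subset inter_subset_right)).const_mul _)
    (ae_of_all _ (supportFun_inter_closedBall_le hS ha hab))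

lemma antitoneOn_gaussWidth_inter_closedBall_div {S : Set (EuclideanSpace ℝ (Fin d))}
    (hS : StarConvex ℝ 0 S) :
    AntitoneOn (fun r => gaussWidth (S ∩ Metric.closedBall 0 r) / r) (Ioi 0) := by
  intro a ha b hb hab
  have h := gaussWidth_inter_closedBall_le hS ha hab
  rw [div_mul_eq_mul_div, le_div_iff₀ ha] at h
  rw [div_le_div_iff₀ hb ha]
  linarith

end GaussianWidth

section FixedPoints

variable (w : ℝ → ℝ)

/-- As `sInf ∅ = 0` in `ℝ`, this is `0` when no radius qualifies. -/
def linearFixedPoint (β : ℝ) : ℝ :=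
  sInf {r | 0 < r ∧ w r ≤ β * r}

def quadraticFixedPoint (α : ℝ) : ℝ :=
  sInf {s | 0 < s ∧ w s ≤ α * s ^ 2}

variable {w} {α β : ℝ}

lemma exists_pos_le_mul_sq_of_antitoneOn (hw : AntitoneOn (fun r => w r / r) (Ioi 0))
    (hα : 0 < α) : ∃ s, 0 < s ∧ w s ≤ α * s ^ 2 := by
  set s := max 1 (w 1 / α)
  have hs : 0 < s := zero_lt_one.trans_le (le_max_left _ _)
  have hws : w s / s ≤ w 1 / 1 := hw (mem_Ioi.2 one_pos) (mem_Ioi.2 hs) (le_max_left _ _)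
  have hw1 : w 1 ≤ α * s := (div_le_iff₀' hα).1 (le_max_right _ _)
  refine ⟨s, hs, ?_⟩
  calc w s ≤ w 1 * s := by rwa [div_one, div_le_iff₀ hs] at hws
    _ ≤ α * s * s := by gcongr
    _ = α * s ^ 2 := by ring

lemma linearFixedPoint_div_two_le_quadraticFixedPoint
    (hw : AntitoneOn (fun r => w r / r) (Ioi 0)) (hα : 0 < α)
    (h : α * linearFixedPoint w β ≤ 2 * β) :
    linearFixedPoint w β / 2 ≤ quadraticFixedPoint w α := by
  refine le_csInf (exists_pos_le_mul_sq_of_antitoneOn hw hα) fun s ⟨hs, hws⟩ => ?_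
  rw [div_le_iff₀' two_pos]
  by_contra! hlt
  have hdouble : w (2 * s) / (2 * s) ≤ w s / s :=
    hw (mem_Ioi.2 hs) (mem_Ioi.2 (by positivity)) (by linarith)
  have hαs : α * s ≤ β := by nlinarith
  have hmem : 2 * s ∈ {r | 0 < r ∧ w r ≤ β * r} := by
    refine ⟨by positivity, ?_⟩
    rw [div_le_div_iff₀ (by positivity) hs] at hdouble
    nlinarith
  exact hlt.not_ge (csInf_le ⟨0, fun r hr => hr.1.le⟩ hmem)

lemma quadraticFixedPoint_le_linearFixedPoint (hα : 0 ≤ α) (hpos : 0 < linearFixedPoint w β)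
    (h : β ≤ α * linearFixedPoint w β) : quadraticFixedPoint w α ≤ linearFixedPoint w β := by
  have hne : {r | 0 < r ∧ w r ≤ β * r}.Nonempty := by
    by_contra hempty
    rw [not_nonempty_iff_eq_empty] at hempty
    exact hpos.ne' (by rw [linearFixedPoint, hempty, Real.sInf_empty])
  refine csInf_le_csInf ⟨0, fun s hs => hs.1.le⟩ hne fun r ⟨hr, hwr⟩ => ⟨hr, ?_⟩
  have hle : linearFixedPoint w β ≤ r := csInf_le ⟨0, fun r hr => hr.1.le⟩ ⟨hr, hwr⟩
  calc w r ≤ β * r := hwr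
    _ ≤ α * linearFixedPoint w β * r := by gcongr
    _ ≤ α * r * r := by gcongr
    _ = α * r ^ 2 := by ring

end FixedPoints

lemma rK_eq_linearFixedPoint {d : ℕ} (T : Set (EuclideanSpace ℝ (Fin d))) (Q : ℝ) (k : ℕ) :
    rK T Q k = linearFixedPoint (fun r => gaussWidth (((2 : ℝ) • T) ∩ Metric.closedBall 0 r))
      (Q * √(k : ℝ)) := by
  simp only [rK, linearFixedPoint, mul_right_comm Q]

lemma sStar_eq_quadraticFixedPoint {d : ℕ} (T : Set (EuclideanSpace ℝ (Fin d))) (N : ℕ) (η : ℝ) :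
    sStar T N η = quadraticFixedPoint (fun s => gaussWidth (((2 : ℝ) • T) ∩ Metric.closedBall 0 s))
      (η * √(N : ℝ)) := by
  simp only [sStar, quadraticFixedPoint, mul_right_comm η]

/-- **Lemma 3.4** (comparison of the fixed points `s_N*` and `r_k`). -/
theorem fixed_point_comparison {d : ℕ} (T : Set (EuclideanSpace ℝ (Fin d)))
    (N : ℕ) (hN : 1 ≤ N) (Q c₀ η : ℝ) (hQ : 0 < Q) (hc₀ : 0 < c₀) (hη : 0 < η)
    (hconv : Convex ℝ T) (hsym : ∀ t ∈ T, -t ∈ T)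
    (hA : {k : ℕ | kStar T Q ≤ k ∧
        rK T Q k ≤ c₀ * Q * Real.sqrt ((k : ℝ) / N)}.Nonempty) :
    (η ≤ 2 / c₀ →
      rK T Q (sInf {k : ℕ | kStar T Q ≤ k ∧
          rK T Q k ≤ c₀ * Q * Real.sqrt ((k : ℝ) / N)}) / 2 ≤ sStar T N η) ∧
    (1 / c₀ ≤ η →
      kStar T Q < sInf {k : ℕ | kStar T Q ≤ k ∧
          rK T Q k ≤ c₀ * Q * Real.sqrt ((k : ℝ) / N)} →
      sStar T N η ≤ rK T Q (sInf {k : ℕ | kStar T Q ≤ k ∧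
          rK T Q k ≤ c₀ * Q * Real.sqrt ((k : ℝ) / N)} - 1)) := by
  set A := {k : ℕ | kStar T Q ≤ k ∧ rK T Q k ≤ c₀ * Q * √((k : ℝ) / N)}
  set k₁ := sInf A
  have hk₁ : k₁ ∈ A := Nat.sInf_mem hA
  have hN' : 0 < √(N : ℝ) := Real.sqrt_pos.2 (by exact_mod_cast hN)
  have hsqrt (k : ℕ) : √((k : ℝ) / N) = √(k : ℝ) / √(N : ℝ) := Real.sqrt_div (Nat.cast_nonneg k) _
  rw [sStar_eq_quadraticFixedPoint]
  refine ⟨fun hη₂ => ?_, fun hη₁ hlt => ?_⟩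
  · have hS : StarConvex ℝ 0 ((2 : ℝ) • T) := by
      simpa using (hconv.starConvex_zero_of_neg_mem hsym).smul (2 : ℝ)
    have hk₁' : rK T Q k₁ ≤ c₀ * Q * (√(k₁ : ℝ) / √(N : ℝ)) := hsqrt k₁ ▸ hk₁.2
    rw [rK_eq_linearFixedPoint] at hk₁' ⊢
    refine linearFixedPoint_div_two_le_quadraticFixedPoint
      (antitoneOn_gaussWidth_inter_closedBall_div hS) (by positivity) ?_
    calc η * √(N : ℝ) * linearFixedPoint _ (Q * √(k₁ : ℝ))
        ≤ η * √(N : ℝ) * (c₀ * Q * (√(k₁ : ℝ) / √(N : ℝ))) := by gcongr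
      _ = η * c₀ * (Q * √(k₁ : ℝ)) := by field_simp
      _ ≤ 2 * (Q * √(k₁ : ℝ)) := by gcongr; exact (le_div_iff₀ hc₀).1 hη₂
  · set k₂ := k₁ - 1
    have hk₂ : c₀ * Q * (√(k₂ : ℝ) / √(N : ℝ)) < rK T Q k₂ := by
      rw [← hsqrt]
      exact not_le.1 fun h => (Nat.notMem_of_lt_sInf (s := A) (by omega)) ⟨by omega, h⟩
    rw [rK_eq_linearFixedPoint] at hk₂ ⊢
    refine quadraticFixedPoint_le_linearFixedPoint (by positivity)
      (lt_of_le_of_lt (by positivity) hk₂) ?_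
    calc Q * √(k₂ : ℝ) = 1 / c₀ * (c₀ * Q * (√(k₂ : ℝ) / √(N : ℝ))) * √(N : ℝ) := by
          field_simp
      _ ≤ η * linearFixedPoint _ (Q * √(k₂ : ℝ)) * √(N : ℝ) := by gcongr
      _ = η * √(N : ℝ) * linearFixedPoint _ (Q * √(k₂ : ℝ)) := by ring
end
end

section
/- (Covering-number lower bound for B₁^d ∩ rB₂^d, Section 5.) There exist absolute constants c₁ ∈ (0,1) and c₂ > 0 such that the following holds. For every dimension d and every r with 1/√d ≤ r ≤ 1 such that k := 1/r² is an integer, log N(B₁^d ∩ rB₂^d, c₁ r B₂^d) ≥ c₂ · log(e d r²)/r², where N(A, εB₂^d) is the minimal number of Euclidean balls of radius ε needed to cover A. -/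
/-!
Write `k = 1 / r²`, so that `log (e d r²) / r² = k (1 + log (d / k))`.

If `d ≥ 16 k`, split `k q ≤ d` coordinates (`q = ⌊d / k⌋ ≥ 16`) into `k` blocks of size `q` and
put the value `r²` on one coordinate of each block. These vectors lie in `B₁ ∩ r B₂`, and two of
them whose choices differ in more than `k / 2` blocks are more than `r / 4` apart. A
Gilbert–Varshamov code in `[q]^k` with minimum distance `> k / 2` has at least
`q^k / (2^k q^{k/2})` words, so `log N ≥ (k / 2) log q - k log 2 ≳ k log q`.

If `d < 16 k`, then `log (d / k) < log 16` and it suffices to get `log N ≳ k`: by Cauchy–Schwarz,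
`B₁ ∩ r B₂` contains an isometric copy of the Euclidean ball of radius `r` in `ℝ^k`, and comparing
volumes shows that covering it by balls of radius `r / 4` needs at least `4^k` of them.
-/

open MeasureTheory Set

noncomputable section

/-- Covering number of a set `A ⊆ ℝ^d` by Euclidean balls of radius `ε`. -/
def covNumE {d : ℕ} (A : Set (EuclideanSpace ℝ (Fin d))) (ε : ℝ) : ℕ :=
  sInf {n : ℕ | ∃ C : Finset (EuclideanSpace ℝ (Fin d)), C.card ≤ n ∧
    ∀ x ∈ A, ∃ c ∈ C, dist x c ≤ ε}

/-- The unit ball of `ℓ₁^d`. -/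
def B1 (d : ℕ) : Set (EuclideanSpace ℝ (Fin d)) := {x | ∑ i, |x i| ≤ 1}

open Metric Bornology Module
open scoped NNReal ENNReal

theorem isCover_toNNReal_iff {X : Type*} [PseudoMetricSpace X] {ε : ℝ} (hε : 0 ≤ ε)
    {A C : Set X} : IsCover ε.toNNReal A C ↔ ∀ x ∈ A, ∃ c ∈ C, dist x c ≤ ε := by
  simp [isCover_iff_subset_iUnion_closedBall, Real.coe_toNNReal _ hε, Set.subset_def]

section CoveringNumbers

variable {d : ℕ} {A : Set (EuclideanSpace ℝ (Fin d))} {ε : ℝ}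

theorem externalCoveringNumber_le_covNumE (hA : IsBounded A) (hε : 0 < ε) :
    externalCoveringNumber ε.toNNReal A ≤ covNumE A ε := by
  obtain ⟨N, -, hN, hNA⟩ := exists_finite_isCover_of_isCompact_closure
    (Real.toNNReal_pos.mpr hε).ne' hA.isCompact_closure
  have hne : {n | ∃ C : Finset (EuclideanSpace ℝ (Fin d)), C.card ≤ n ∧
      ∀ x ∈ A, ∃ c ∈ C, dist x c ≤ ε}.Nonempty :=
    ⟨_, hN.toFinset, le_rfl, by simpa using (isCover_toNNReal_iff hε.le).mp hNA⟩
  obtain ⟨C, hCcard, hCA⟩ := Nat.sInf_mem hne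
  calc externalCoveringNumber ε.toNNReal A ≤ (↑C : Set (EuclideanSpace ℝ (Fin d))).encard :=
        ((isCover_toNNReal_iff hε.le).mpr hCA).externalCoveringNumber_le_encard
    _ = C.card := Set.encard_coe_eq_coe_finsetCard C
    _ ≤ covNumE A ε := by exact_mod_cast hCcard

theorem card_le_covNumE_of_pairwise_lt_dist (hA : IsBounded A) (hε : 0 < ε)
    {P : Finset (EuclideanSpace ℝ (Fin d))} (hPA : ↑P ⊆ A)
    (hP : (↑P : Set (EuclideanSpace ℝ (Fin d))).Pairwise fun p p' => 2 * ε < dist p p') :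
    P.card ≤ covNumE A ε := by
  have hsep : IsSeparated ↑(2 * ε.toNNReal) (↑P : Set (EuclideanSpace ℝ (Fin d))) :=
      fun p hp p' hp' hpp' => by
    have h := hP hp hp' hpp'
    change _ < _
    rw [edist_dist, ← ENNReal.ofReal_coe_nnreal, ENNReal.ofReal_lt_ofReal_iff (by linarith)]
    simpa [Real.coe_toNNReal _ hε.le] using h
  have := ((hsep.encard_le_packingNumber hPA).trans
    (packingNumber_two_mul_le_externalCoveringNumber _ A)).trans
    (externalCoveringNumber_le_covNumE hA hε)
  rwa [Set.encard_coe_eq_coe_finsetCard, Nat.cast_le] at this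

end CoveringNumbers

section Volume

variable {E : Type*} [NormedAddCommGroup E] [NormedSpace ℝ E] [FiniteDimensional ℝ E]

theorem pow_finrank_le_card_mul_of_isCover {C : Finset E} {x : E} {r : ℝ} (hr : 0 ≤ r)
    {ε : ℝ≥0} (hcov : IsCover ε (closedBall x r) C) :
    r ^ finrank ℝ E ≤ C.card * (ε : ℝ) ^ finrank ℝ E := by
  borelize E
  set μ : Measure E := Measure.addHaar
  have hB : μ (ball 0 1) ≠ 0 := (measure_ball_pos μ 0 one_pos).ne'
  have hB' : μ (ball 0 1) ≠ ∞ := measure_ball_lt_top.ne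
  have key : ENNReal.ofReal (r ^ finrank ℝ E) * μ (ball 0 1) ≤
      ENNReal.ofReal (C.card * (ε : ℝ) ^ finrank ℝ E) * μ (ball 0 1) := calc
    _ = μ (closedBall x r) := (μ.addHaar_closedBall x hr).symm
    _ ≤ μ (⋃ c ∈ C, closedBall c ε) := measure_mono (by simpa using hcov.subset_iUnion_closedBall)
    _ ≤ ∑ c ∈ C, μ (closedBall c ε) := measure_biUnion_finset_le C _
    _ = ∑ _c ∈ C, ENNReal.ofReal ((ε : ℝ) ^ finrank ℝ E) * μ (ball 0 1) :=
      Finset.sum_congr rfl fun c _ => μ.addHaar_closedBall c ε.2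
    _ = _ := by
      rw [Finset.sum_const, nsmul_eq_mul, ENNReal.ofReal_mul (by positivity),
        ENNReal.ofReal_natCast, mul_assoc]
  exact (ENNReal.ofReal_le_ofReal_iff (by positivity)).mp
    ((ENNReal.mul_le_mul_iff_left hB hB').mp key)

theorem pow_finrank_le_covNumE_of_isometry {d : ℕ} {A : Set (EuclideanSpace ℝ (Fin d))}
    (hA : IsBounded A) {T : E → EuclideanSpace ℝ (Fin d)} (hT : Isometry T) {r ε : ℝ}
    (hr : 0 ≤ r) (hε : 0 < ε) (hTA : T '' closedBall 0 r ⊆ A) :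
    (r / (2 * ε)) ^ finrank ℝ E ≤ covNumE A ε := by
  have hcov : coveringNumber (2 * ε.toNNReal) (closedBall (0 : E) r) ≤ covNumE A ε := calc
    _ = coveringNumber (2 * ε.toNNReal) (T '' closedBall 0 r) := hT.coveringNumber_image.symm
    _ ≤ externalCoveringNumber ε.toNNReal (T '' closedBall 0 r) :=
      coveringNumber_two_mul_le_externalCoveringNumber _ _
    _ ≤ externalCoveringNumber ε.toNNReal A := externalCoveringNumber_mono_set hTA
    _ ≤ covNumE A ε := externalCoveringNumber_le_covNumE hA hε
  have htop : coveringNumber (2 * ε.toNNReal) (closedBall (0 : E) r) ≠ ⊤ :=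
    ne_top_of_le_ne_top (ENat.natCast_ne_top _) hcov
  set M := (finite_minimalCover (ε := 2 * ε.toNNReal) (A := closedBall (0 : E) r)).toFinset
  have hM : (M.card : ℕ∞) ≤ covNumE A ε := by
    rw [← Set.Finite.encard_eq_coe_toFinset_card, encard_minimalCover htop]
    exact hcov
  have hvol := pow_finrank_le_card_mul_of_isCover hr (C := M)
    (by simpa [M] using isCover_minimalCover htop)
  rw [div_pow, div_le_iff₀ (by positivity)]
  calc r ^ finrank ℝ E ≤ M.card * (2 * ε) ^ finrank ℝ E := by
        simpa [Real.coe_toNNReal _ hε.le] using hvol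
    _ ≤ covNumE A ε * (2 * ε) ^ finrank ℝ E := by gcongr; exact_mod_cast hM

end Volume

section ExtendByZero

open Function

variable {ι κ : Type*} [Fintype ι] [Fintype κ] {e : ι → κ}

theorem sum_comp_extend_zero {R M : Type*} [Zero R] [AddCommMonoid M] (he : Injective e)
    {φ : R → M} (hφ : φ 0 = 0) (g : ι → R) :
    ∑ i, φ (extend e g 0 i) = ∑ j, φ (g j) :=
  (Fintype.sum_of_injective e he _ _
    (fun i hi => by rw [extend_apply' _ _ _ (by simpa using hi), Pi.zero_apply, hφ])
    (fun j => by rw [he.extend_apply])).symm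

def EuclideanSpace.extendByZero (𝕜 : Type*) [RCLike 𝕜] (he : Injective e) :
    EuclideanSpace 𝕜 ι →ₗᵢ[𝕜] EuclideanSpace 𝕜 κ where
  toLinearMap := (WithLp.linearEquiv 2 𝕜 (κ → 𝕜)).symm.toLinearMap ∘ₗ
    ExtendByZero.linearMap 𝕜 e ∘ₗ (WithLp.linearEquiv 2 𝕜 (ι → 𝕜)).toLinearMap
  norm_map' z := by
    simp [EuclideanSpace.norm_eq, sum_comp_extend_zero he (φ := fun t : 𝕜 => ‖t‖ ^ 2)]

theorem EuclideanSpace.extendByZero_apply {𝕜 : Type*} [RCLike 𝕜] (he : Injective e)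
    (z : EuclideanSpace 𝕜 ι) (i : κ) : extendByZero 𝕜 he z i = extend e z 0 i := rfl

theorem sum_abs_extendByZero (he : Injective e) (z : EuclideanSpace ℝ ι) :
    ∑ i, |EuclideanSpace.extendByZero ℝ he z i| = ∑ j, |z j| :=
  sum_comp_extend_zero he abs_zero z

end ExtendByZero

theorem sqrt_natCast_mul_eq_one {n : ℕ} {r : ℝ} (hr : 0 ≤ r) (h : (n : ℝ) * r ^ 2 = 1) :
    √(n : ℝ) * r = 1 := by
  rw [← Real.sqrt_sq hr, ← Real.sqrt_mul (Nat.cast_nonneg _), h, Real.sqrt_one]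

section L1Ball

variable {ι : Type*} [Fintype ι]

theorem sum_abs_le_sqrt_card_mul_norm (z : EuclideanSpace ℝ ι) :
    ∑ j, |z j| ≤ √(Fintype.card ι) * ‖z‖ := by
  rw [EuclideanSpace.norm_eq, ← Real.sqrt_mul (by positivity)]
  refine Real.le_sqrt_of_sq_le ?_
  simpa [sq_abs] using sq_sum_le_card_mul_sum_sq (s := Finset.univ) (f := fun j => |z j|)

theorem extendByZero_mem_B1_inter_closedBall {d : ℕ} {e : ι → Fin d} (he : Function.Injective e)
    {r : ℝ} (hr : 0 ≤ r) (hιr : Fintype.card ι * r ^ 2 = 1) {z : EuclideanSpace ℝ ι}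
    (hz : ‖z‖ ≤ r) : EuclideanSpace.extendByZero ℝ he z ∈ B1 d ∩ closedBall 0 r := by
  refine ⟨?_, by simpa using hz⟩
  calc ∑ i, |EuclideanSpace.extendByZero ℝ he z i| = ∑ j, |z j| := sum_abs_extendByZero he z
    _ ≤ √(Fintype.card ι) * ‖z‖ := sum_abs_le_sqrt_card_mul_norm z
    _ ≤ √(Fintype.card ι) * r := by gcongr
    _ = 1 := sqrt_natCast_mul_eq_one hr hιr

end L1Ball

theorem edist_hamming {ι α : Type*} [Fintype ι] [DecidableEq α]
    (w w' : Hamming fun _ : ι => α) :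
    edist w w' = hammingDist (Hamming.ofHamming w) (Hamming.ofHamming w') := by
  rw [edist_dist, Hamming.dist_eq_hammingDist, ENNReal.ofReal_natCast]

section HammingCodes

open Finset (univ)
open scoped Finset

variable {ι α : Type*} [Fintype ι] [DecidableEq ι] [Fintype α] [DecidableEq α]

theorem card_filter_hammingDist_le [Nonempty α] (c : ι → α) (s : ℕ) :
    #{w | hammingDist w c ≤ s} ≤ 2 ^ Fintype.card ι * Fintype.card α ^ s := by
  set agreeOff : Finset ι → Finset (ι → α) := fun D =>
    Fintype.piFinset fun i => if i ∈ D then univ else {c i}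
  have hsub : ({w | hammingDist w c ≤ s} : Finset (ι → α)) ⊆
      ({D | D.card ≤ s} : Finset (Finset ι)).biUnion agreeOff := by
    intro w hw
    refine Finset.mem_biUnion.mpr
      ⟨({i | w i ≠ c i} : Finset ι), by simpa [hammingDist] using hw, ?_⟩
    simp only [agreeOff, Fintype.mem_piFinset]
    intro i
    split_ifs with hi
    · exact Finset.mem_univ _
    · simpa using hi
  have hcard : ∀ D : Finset ι, D.card ≤ s → (agreeOff D).card ≤ Fintype.card α ^ s := by
    intro D hD
    calc (agreeOff D).card = Fintype.card α ^ D.card := by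
          simp [agreeOff, Fintype.card_piFinset, apply_ite Finset.card, Finset.prod_ite_mem]
      _ ≤ Fintype.card α ^ s := Nat.pow_le_pow_right Fintype.card_pos hD
  calc _ ≤ _ := Finset.card_le_card hsub
    _ ≤ _ := Finset.card_biUnion_le
    _ ≤ ({D | D.card ≤ s} : Finset (Finset ι)).card * Fintype.card α ^ s :=
        Finset.sum_le_card_nsmul _ _ _ fun D hD => hcard D (Finset.mem_filter.mp hD).2
    _ ≤ 2 ^ Fintype.card ι * Fintype.card α ^ s := by
        gcongr
        simpa using Finset.card_filter_le (univ : Finset (Finset ι)) _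

theorem exists_code_gilbert_varshamov [Nonempty α] (s : ℕ) :
    ∃ C : Finset (ι → α), (↑C : Set (ι → α)).Pairwise (fun w w' => s < hammingDist w w') ∧
      Fintype.card α ^ Fintype.card ι ≤ #C * (2 ^ Fintype.card ι * Fintype.card α ^ s) := by
  have htop : packingNumber (s : ℝ≥0) (univ : Set (Hamming fun _ : ι => α)) ≠ ⊤ :=
    ne_top_of_le_ne_top Set.finite_univ.encard_lt_top.ne (packingNumber_le_encard_self _)
  set N := maximalSeparatedSet (s : ℝ≥0) (univ : Set (Hamming fun _ : ι => α))
  set C : Finset (ι → α) := N.toFinite.toFinset.map Hamming.ofHamming.toEmbedding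
  have hC : ∀ w, w ∈ C ↔ Hamming.toHamming w ∈ N := by simp [C]
  refine ⟨C, fun w hw w' hw' hne => ?_, ?_⟩
  · simpa [edist_hamming] using
      isSeparated_maximalSeparatedSet ((hC w).mp hw) ((hC w').mp hw') (by simpa using hne)
  · have hsub : (univ : Finset (ι → α)) ⊆ C.biUnion fun c => {w | hammingDist w c ≤ s} := by
      intro w _
      obtain ⟨c, hc, hwc⟩ := isCover_maximalSeparatedSet htop (Set.mem_univ (Hamming.toHamming w))
      refine Finset.mem_biUnion.mpr ⟨Hamming.ofHamming c, by simpa [hC] using hc, ?_⟩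
      simpa [edist_hamming] using hwc
    calc Fintype.card α ^ Fintype.card ι = #(univ : Finset (ι → α)) := by simp
      _ ≤ _ := Finset.card_le_card hsub
      _ ≤ _ := Finset.card_biUnion_le
      _ ≤ _ := Finset.sum_le_card_nsmul _ _ _ fun c _ => card_filter_hammingDist_le c s

end HammingCodes

theorem Function.Injective.comp_graph {ι α κ : Type*} {e : ι × α → κ} (he : Function.Injective e)
    (w : ι → α) : Function.Injective fun j => e (j, w j) :=
  fun _ _ h => (Prod.ext_iff.mp (he h)).1

section CodePoints

open Function

variable {ι α κ : Type*} [Fintype ι] [Fintype κ] {e : ι × α → κ}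

def codePoint (he : Injective e) (t : ℝ) (w : ι → α) : EuclideanSpace ℝ κ :=
  EuclideanSpace.extendByZero ℝ (he.comp_graph w) (WithLp.toLp 2 fun _ => t)

theorem sqrt_hammingDist_mul_le_dist_codePoint [DecidableEq α] (he : Injective e) (t : ℝ)
    (w w' : ι → α) :
    √(hammingDist w w') * |t| ≤ dist (codePoint he t w) (codePoint he t w') := by
  set D : Finset ι := {j | w j ≠ w' j}
  have hterm : ∀ j ∈ D, dist (codePoint he t w (e (j, w j))) (codePoint he t w' (e (j, w j))) ^ 2
      = t ^ 2 := by
    intro j hj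
    have hout : ¬∃ j', e (j', w' j') = e (j, w j) := by
      rintro ⟨j', hj'⟩
      obtain ⟨rfl, h⟩ := Prod.ext_iff.mp (he hj')
      exact (Finset.mem_filter.mp hj).2 h.symm
    simp [codePoint, EuclideanSpace.extendByZero_apply, (he.comp_graph w).extend_apply,
      extend_apply' _ _ _ hout]
  rw [EuclideanSpace.dist_eq, ← Real.sqrt_sq_eq_abs, ← Real.sqrt_mul (Nat.cast_nonneg _)]
  refine Real.sqrt_le_sqrt ?_
  calc (hammingDist w w' : ℝ) * t ^ 2 = ∑ j ∈ D, t ^ 2 := by simp [D, hammingDist]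
    _ = ∑ i ∈ D.map ⟨_, he.comp_graph w⟩,
          dist (codePoint he t w i) (codePoint he t w' i) ^ 2 := by
      rw [Finset.sum_map]; exact (Finset.sum_congr rfl hterm).symm
    _ ≤ _ := Finset.sum_le_univ_sum_of_nonneg fun i => sq_nonneg _

end CodePoints

section Numerics

open Real

theorem log_bound_of_code {k q s n : ℕ} {u : ℝ} (hq : 16 ≤ q) (hs : 2 * s ≤ k)
    (hn : q ^ k ≤ n * (2 ^ k * q ^ s)) (hu : 0 < u) (huq : u ≤ 2 * q) :
    1 / 10 * (k * (1 + log u)) ≤ log n := by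
  have hq' : (16 : ℝ) ≤ q := by exact_mod_cast hq
  have hs' : 2 * (s : ℝ) ≤ k := by exact_mod_cast hs
  have hn' : (q : ℝ) ^ k ≤ n * (2 ^ k * (q : ℝ) ^ s) := by exact_mod_cast hn
  have hnpos : (0 : ℝ) < n := by
    have : 0 < n * (2 ^ k * q ^ s) := lt_of_lt_of_le (by positivity) hn
    exact_mod_cast Nat.pos_of_ne_zero fun h => by simp [h] at this
  have hlog : k * log q ≤ log n + k * log 2 + s * log q := by
    have := log_le_log (by positivity) hn'
    rwa [log_mul hnpos.ne' (by positivity), log_mul (by positivity) (by positivity), log_pow,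
      log_pow, log_pow, ← add_assoc] at this
  have hlog2 : 0.6931471803 < log 2 := log_two_gt_d9
  have hlogq : 4 * log 2 ≤ log q := calc
    4 * log 2 = log (2 ^ 4) := by rw [log_pow]; norm_num
    _ ≤ log q := log_le_log (by norm_num) (by norm_num; linarith)
  have hlogu : log u ≤ log 2 + log q := by
    rw [← log_mul two_ne_zero (by positivity)]
    exact log_le_log hu huq
  have hk : (0 : ℝ) ≤ k := Nat.cast_nonneg k
  nlinarith [mul_le_mul_of_nonneg_left hlogq hk, mul_le_mul_of_nonneg_left hlogu hk,
    mul_le_mul_of_nonneg_right hs' (by linarith : 0 ≤ log (q : ℝ))]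

theorem log_bound_of_volume {k n : ℕ} {u : ℝ} (hn : 4 ^ k ≤ n) (hu : 0 < u) (hu16 : u < 16) :
    1 / 10 * (k * (1 + log u)) ≤ log n := by
  have hlog4 : k * log 4 ≤ log n := by
    rw [← log_pow]
    exact log_le_log (by positivity) (by exact_mod_cast hn)
  have hlogu : log u ≤ 2 * log 4 := calc
    log u ≤ log (4 ^ 2) := log_le_log hu (by norm_num; linarith)
    _ = 2 * log 4 := by rw [log_pow]; norm_num
  have hlog2 : 0.6931471803 < log 2 := log_two_gt_d9
  have h42 : log 4 = 2 * log 2 := by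
    rw [show (4 : ℝ) = 2 ^ 2 by norm_num, log_pow]; norm_num
  have hk : (0 : ℝ) ≤ k := Nat.cast_nonneg k
  nlinarith [mul_le_mul_of_nonneg_left hlogu hk]

end Numerics

section Regimes

variable {d k : ℕ} {r : ℝ}

theorem isBounded_B1_inter_closedBall : IsBounded (B1 d ∩ closedBall 0 r) :=
  isBounded_closedBall.subset inter_subset_right

theorem exists_sparse_packing {q : ℕ} [NeZero q] (s : ℕ) (hkq : k * q ≤ d) (hr : 0 < r)
    (hkr : (k : ℝ) * r ^ 2 = 1) :
    ∃ P : Finset (EuclideanSpace ℝ (Fin d)), ↑P ⊆ B1 d ∩ closedBall 0 r ∧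
      (↑P : Set (EuclideanSpace ℝ (Fin d))).Pairwise (fun p p' => √(s + 1) * r ^ 2 ≤ dist p p') ∧
      q ^ k ≤ P.card * (2 ^ k * q ^ s) := by
  have he : Function.Injective (Fin.castLE hkq ∘ finProdFinEquiv) :=
    (Fin.castLE_injective hkq).comp finProdFinEquiv.injective
  obtain ⟨C, hCsep, hCcard⟩ := exists_code_gilbert_varshamov (ι := Fin k) (α := Fin q) s
  set x := codePoint he (r ^ 2)
  have hsep : (↑C : Set (Fin k → Fin q)).Pairwise
      fun w w' => √(s + 1) * r ^ 2 ≤ dist (x w) (x w') := by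
    intro w hw w' hw' hne
    have hh : (s : ℝ) + 1 ≤ hammingDist w w' := by exact_mod_cast hCsep hw hw' hne
    calc √(s + 1) * r ^ 2 ≤ √(hammingDist w w') * |r ^ 2| := by
          rw [abs_of_nonneg (by positivity)]; gcongr
      _ ≤ dist (x w) (x w') := sqrt_hammingDist_mul_le_dist_codePoint he _ w w'
  have hinj : Set.InjOn x C := fun w hw w' hw' h => by
    by_contra hne
    have : √(s + 1) * r ^ 2 ≤ dist (x w) (x w') := hsep hw hw' hne
    rw [h, dist_self] at this
    nlinarith [Real.sqrt_pos.mpr (by positivity : (0 : ℝ) < s + 1), pow_pos hr 2]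
  refine ⟨C.image x, ?_, by rw [Finset.coe_image]; exact hinj.pairwise_image.mpr hsep, ?_⟩
  · rw [Finset.coe_image]
    rintro _ ⟨w, -, rfl⟩
    refine extendByZero_mem_B1_inter_closedBall _ hr.le (by simpa using hkr) (le_of_eq ?_)
    simp only [EuclideanSpace.norm_eq, Real.norm_eq_abs, sq_abs, Finset.sum_const,
      Finset.card_univ, Fintype.card_fin, nsmul_eq_mul]
    rw [Real.sqrt_mul (Nat.cast_nonneg _), Real.sqrt_sq (by positivity), pow_two, ← mul_assoc,
      sqrt_natCast_mul_eq_one hr.le hkr, one_mul]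
  · simpa [Finset.card_image_of_injOn hinj] using hCcard

theorem log_covNumE_ge_of_sixteen_mul_le (hr : 0 < r) (hkr : (k : ℝ) * r ^ 2 = 1)
    (hkd : 16 * k ≤ d) :
    1 / 10 * (k * (1 + Real.log (d * r ^ 2))) ≤
      Real.log (covNumE (B1 d ∩ closedBall 0 r) (1 / 8 * r)) := by
  have hk : 0 < k := Nat.pos_of_ne_zero fun h => by simp [h] at hkr
  set q := d / k
  set s := k / 2
  have hq : 16 ≤ q := (Nat.le_div_iff_mul_le hk).mpr (by linarith)
  have : NeZero q := ⟨by omega⟩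
  obtain ⟨P, hPA, hPsep, hPcard⟩ := exists_sparse_packing s (Nat.mul_div_le d k) hr hkr
  have hsep : 2 * (1 / 8 * r) < √(s + 1) * r ^ 2 := by
    have hks : (k : ℝ) < 2 * (s + 1) := by exact_mod_cast (by omega : k < 2 * (s + 1))
    have h4 : 1 / 4 < √(s + 1) * r := by
      rw [← Real.sqrt_sq hr.le, ← Real.sqrt_mul (by positivity), Real.lt_sqrt (by norm_num)]
      nlinarith
    nlinarith
  have hPN := card_le_covNumE_of_pairwise_lt_dist isBounded_B1_inter_closedBall
    (by positivity) hPA (hPsep.imp fun _ _ => hsep.trans_le)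
  have hdq : (d : ℝ) < k * (q + 1) := by exact_mod_cast Nat.lt_mul_div_succ d hk
  have hd : (0 : ℝ) < d := by exact_mod_cast (by omega : 0 < d)
  have hq1 : (1 : ℝ) ≤ q := by exact_mod_cast (by omega : 1 ≤ q)
  exact log_bound_of_code hq (by omega) (hPcard.trans (Nat.mul_le_mul_right _ hPN))
    (by positivity) (by nlinarith)

theorem log_covNumE_ge_of_lt_sixteen_mul (hr : 0 < r)
    (hkr : (k : ℝ) * r ^ 2 = 1) (hkd : k ≤ d) (hdk : d < 16 * k) :
    1 / 10 * (k * (1 + Real.log (d * r ^ 2))) ≤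
      Real.log (covNumE (B1 d ∩ closedBall 0 r) (1 / 8 * r)) := by
  set T := EuclideanSpace.extendByZero ℝ (Fin.castLE_injective hkd)
  have hTA : T '' closedBall 0 r ⊆ B1 d ∩ closedBall 0 r := by
    rintro _ ⟨z, hz, rfl⟩
    exact extendByZero_mem_B1_inter_closedBall _ hr.le (by simpa using hkr) (by simpa using hz)
  have hN := pow_finrank_le_covNumE_of_isometry isBounded_B1_inter_closedBall T.isometry hr.le
    (by positivity : 0 < 1 / 8 * r) hTA
  rw [finrank_euclideanSpace_fin, show r / (2 * (1 / 8 * r)) = 4 by field_simp; norm_num] at hN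
  have hk : (0 : ℝ) < k := by
    exact_mod_cast Nat.pos_of_ne_zero fun h => by simp [h] at hkr
  have hd : (0 : ℝ) < d := hk.trans_le (by exact_mod_cast hkd)
  refine log_bound_of_volume (by exact_mod_cast hN) (by positivity) ?_
  have : (d : ℝ) < 16 * k := by exact_mod_cast hdk
  nlinarith

theorem log_exp_mul_div_sq (hd : 0 < d) (hkr : (k : ℝ) * r ^ 2 = 1) :
    Real.log (Real.exp 1 * d * r ^ 2) / r ^ 2 = k * (1 + Real.log (d * r ^ 2)) := by
  have hr : r ^ 2 ≠ 0 := fun h => by simp [h] at hkr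
  rw [mul_assoc, Real.log_mul (Real.exp_ne_zero 1) (by positivity), Real.log_exp,
    div_eq_iff hr]
  linear_combination (1 + Real.log (d * r ^ 2)) * hkr.symm

end Regimes

/-- **Covering-number lower bound for `B₁^d ∩ rB₂^d`** (Section 5). -/
theorem covering_lower_bound_B1 :
    ∃ c₁ c₂ : ℝ, 0 < c₁ ∧ c₁ < 1 ∧ 0 < c₂ ∧
      ∀ (d : ℕ) (r : ℝ), 1 / Real.sqrt (d : ℝ) ≤ r → r ≤ 1 →
        (∃ k : ℕ, (k : ℝ) * r ^ 2 = 1) →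
        c₂ * (Real.log (Real.exp 1 * (d : ℝ) * r ^ 2) / r ^ 2) ≤
          Real.log (covNumE (B1 d ∩ Metric.closedBall 0 r) (c₁ * r) : ℝ) := by
  refine ⟨1 / 8, 1 / 10, by norm_num, by norm_num, by norm_num, ?_⟩
  rintro d r hrd - ⟨k, hkr⟩
  rcases Nat.eq_zero_or_pos d with rfl | hd
  · simpa using Real.log_natCast_nonneg _
  have hsd : 0 < √(d : ℝ) := Real.sqrt_pos.mpr (by exact_mod_cast hd)
  have hr : 0 < r := (one_div_pos.mpr hsd).trans_le hrd
  have hkd : k ≤ d := by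
    have h1 : 1 ≤ √(d : ℝ) * r := by rwa [div_le_iff₀ hsd, mul_comm] at hrd
    have h2 : (1 : ℝ) ≤ d * r ^ 2 := by
      nlinarith [Real.sq_sqrt (Nat.cast_nonneg (α := ℝ) d)]
    have : (k : ℝ) ≤ d := by nlinarith
    exact_mod_cast this
  rw [log_exp_mul_div_sq hd hkr]
  rcases le_or_gt (16 * k) d with hdk | hdk
  · exact log_covNumE_ge_of_sixteen_mul_le hr hkr hdk
  · exact log_covNumE_ge_of_lt_sixteen_mul hr hkr hkd hdk
end
end
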